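/- Let h : [0,1] → ℝ be continuous and x ∈ (0,1). Then ∫₀¹ β_α(t,x) h(t) dt → h(x) as α → ∞, where β_α(t,x) = t^{⌊αx⌋}(1−t)^{α−⌊αx⌋}/B(⌊αx⌋+1, α−⌊αx⌋+1). -/

import Mathlib

/-!
The kernel `β_α(·, x)` is the Beta density with parameters `k + 1`, `α - k + 1`, where
`k = ⌊αx⌋`. From `B(u + 1, v) = u / (u + v) · B(u, v)` its first two moments are
`p = (k + 1)/(α + 2)` and `p · (k + 2)/(α + 3)`, and both ratios tend to `x`; hence its second
moment about `x` tends to `0`. Nonnegative kernels of mass one whose second moment about `x`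
vanishes in the limit concentrate at `x`: for continuous `h` on a compact set,
`|h t - h x| ≤ ε + c (t - x)²` (continuity near `x`, boundedness away from it), so
`|∫ K h - h x| ≤ ε + c ∫ K (t - x)²`.
-/

open MeasureTheory Filter

/-- The Beta function `B(u,v) = Γ(u)Γ(v)/Γ(u+v)`. -/
noncomputable def betaFn (u v : ℝ) : ℝ :=
  Real.Gamma u * Real.Gamma v / Real.Gamma (u + v)

/-- The beta kernel `β_α(t,x) = t^⌊αx⌋ (1−t)^(α−⌊αx⌋) / B(⌊αx⌋+1, α−⌊αx⌋+1)`. -/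
noncomputable def betaKer (α : ℕ) (x t : ℝ) : ℝ :=
  t ^ ⌊(α : ℝ) * x⌋₊ * (1 - t) ^ (α - ⌊(α : ℝ) * x⌋₊) /
    betaFn ((⌊(α : ℝ) * x⌋₊ : ℝ) + 1) (((α - ⌊(α : ℝ) * x⌋₊ : ℕ) : ℝ) + 1)

open Set Topology

lemma betaFn_pos {u v : ℝ} (hu : 0 < u) (hv : 0 < v) : 0 < betaFn u v :=
  div_pos (mul_pos (Real.Gamma_pos_of_pos hu) (Real.Gamma_pos_of_pos hv))
    (Real.Gamma_pos_of_pos (add_pos hu hv))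

lemma betaFn_add_one_left {u v : ℝ} (hu : u ≠ 0) (huv : u + v ≠ 0) :
    betaFn (u + 1) v = u / (u + v) * betaFn u v := by
  rw [betaFn, betaFn, add_right_comm, Real.Gamma_add_one hu, Real.Gamma_add_one huv]
  field_simp

lemma integral_pow_mul_one_sub_pow (k m : ℕ) :
    ∫ t in (0:ℝ)..1, t ^ k * (1 - t) ^ m = betaFn (k + 1) (m + 1) := by
  have h := Complex.betaIntegral_eq_Gamma_mul_div ((k : ℂ) + 1) ((m : ℂ) + 1)
    (by simp; positivity) (by simp; positivity)
  simp only [Complex.betaIntegral, add_sub_cancel_right, Complex.cpow_natCast] at h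
  apply Complex.ofReal_injective
  rw [← intervalIntegral.integral_ofReal]
  push_cast
  rw [h, betaFn]
  push_cast [← Complex.Gamma_ofReal]
  rfl

noncomputable def betaDensity (k m : ℕ) (t : ℝ) : ℝ :=
  t ^ k * (1 - t) ^ m / betaFn (k + 1) (m + 1)

lemma betaKer_eq_betaDensity (α : ℕ) (x : ℝ) :
    betaKer α x = betaDensity ⌊(α : ℝ) * x⌋₊ (α - ⌊(α : ℝ) * x⌋₊) := rfl

section betaDensity

variable (k m : ℕ)

lemma continuous_betaDensity : Continuous (betaDensity k m) := by
  unfold betaDensity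
  fun_prop

lemma betaDensity_nonneg {t : ℝ} (ht : t ∈ Icc (0 : ℝ) 1) : 0 ≤ betaDensity k m t := by
  have hB : 0 < betaFn (k + 1) (m + 1) := betaFn_pos (by positivity) (by positivity)
  have ht₀ : 0 ≤ t := ht.1
  have ht₁ : 0 ≤ 1 - t := sub_nonneg.2 ht.2
  unfold betaDensity
  positivity

lemma integral_betaDensity_mul_pow (j : ℕ) :
    ∫ t in (0:ℝ)..1, betaDensity k m t * t ^ j =
      betaFn (k + j + 1) (m + 1) / betaFn (k + 1) (m + 1) := by
  have hpow (t : ℝ) : betaDensity k m t * t ^ j =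
      t ^ (k + j) * (1 - t) ^ m / betaFn (k + 1) (m + 1) := by
    rw [betaDensity, pow_add]
    ring
  simp_rw [hpow, intervalIntegral.integral_div, integral_pow_mul_one_sub_pow]
  push_cast
  rfl

lemma integral_betaDensity : ∫ t in (0:ℝ)..1, betaDensity k m t = 1 := by
  have hB : betaFn (k + 1) (m + 1) ≠ 0 := (betaFn_pos (by positivity) (by positivity)).ne'
  simpa [hB] using integral_betaDensity_mul_pow k m 0

lemma integral_betaDensity_mul_sq_sub (x : ℝ) :
    ∫ t in (0:ℝ)..1, betaDensity k m t * (t - x) ^ 2 =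
      (k + 1) / (k + m + 2) * ((k + 2) / (k + m + 3)) - 2 * x * ((k + 1) / (k + m + 2)) +
        x ^ 2 := by
  have hB : betaFn (k + 1) (m + 1) ≠ 0 := (betaFn_pos (by positivity) (by positivity)).ne'
  have hmean : ∫ t in (0:ℝ)..1, betaDensity k m t * t ^ 1 = (k + 1) / (k + m + 2) := by
    rw [integral_betaDensity_mul_pow, Nat.cast_one, add_right_comm,
      betaFn_add_one_left (by positivity) (by positivity)]
    field_simp
    ring
  have hsecond : ∫ t in (0:ℝ)..1, betaDensity k m t * t ^ 2 =
      (k + 1) / (k + m + 2) * ((k + 2) / (k + m + 3)) := by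
    rw [integral_betaDensity_mul_pow,
      show (k : ℝ) + (2 : ℕ) + 1 = (k + 1 + 1) + 1 by push_cast; ring,
      betaFn_add_one_left (by positivity) (by positivity),
      betaFn_add_one_left (by positivity) (by positivity)]
    field_simp
    ring
  have hint (j : ℕ) : IntervalIntegrable (fun t => betaDensity k m t * t ^ j) volume 0 1 :=
    ((continuous_betaDensity k m).mul (continuous_pow j)).intervalIntegrable 0 1
  have hexpand (t : ℝ) : betaDensity k m t * (t - x) ^ 2 =
      betaDensity k m t * t ^ 2 - 2 * x * (betaDensity k m t * t ^ 1) +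
        x ^ 2 * (betaDensity k m t * t ^ 0) := by
    ring
  simp_rw [hexpand]
  rw [intervalIntegral.integral_add ((hint 2).sub ((hint 1).const_mul _)) ((hint 0).const_mul _),
    intervalIntegral.integral_sub (hint 2) ((hint 1).const_mul _),
    intervalIntegral.integral_const_mul, intervalIntegral.integral_const_mul, hmean, hsecond]
  simp [integral_betaDensity]

end betaDensity

lemma tendsto_natFloor_mul_add_div_add {x : ℝ} (hx : 0 ≤ x) (a b : ℝ) :
    Tendsto (fun n : ℕ => ((⌊(n : ℝ) * x⌋₊ : ℝ) + a) / (n + b)) atTop (𝓝 x) := by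
  have hfloor : Tendsto (fun n : ℕ => (⌊(n : ℝ) * x⌋₊ : ℝ) / n) atTop (𝓝 x) := by
    refine ((tendsto_nat_floor_mul_div_atTop hx).comp tendsto_natCast_atTop_atTop).congr
      fun n => ?_
    simp only [Function.comp_apply, mul_comm x]
  have hlim := (hfloor.add (tendsto_const_div_atTop_nhds_zero_nat a)).div
    ((tendsto_const_nhds (x := (1 : ℝ))).add (tendsto_const_div_atTop_nhds_zero_nat b))
    (by norm_num)
  rw [add_zero, add_zero, div_one] at hlim
  refine hlim.congr' ((eventually_ne_atTop 0).mono fun n hn => ?_)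
  have hn' : (n : ℝ) ≠ 0 := Nat.cast_ne_zero.2 hn
  simp only [Pi.div_apply]
  field_simp

lemma tendsto_integral_betaKer_mul_sq_sub {x : ℝ} (hx : x ∈ Icc (0 : ℝ) 1) :
    Tendsto (fun α : ℕ => ∫ t in (0:ℝ)..1, betaKer α x t * (t - x) ^ 2) atTop (𝓝 0) := by
  have hfloor_le (α : ℕ) : ⌊(α : ℝ) * x⌋₊ ≤ α :=
    Nat.floor_le_of_le (mul_le_of_le_one_right α.cast_nonneg hx.2)
  have hmoment (α : ℕ) : ∫ t in (0:ℝ)..1, betaKer α x t * (t - x) ^ 2 =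
      (⌊(α : ℝ) * x⌋₊ + 1) / (α + 2) * ((⌊(α : ℝ) * x⌋₊ + 2) / (α + 3)) -
        2 * x * ((⌊(α : ℝ) * x⌋₊ + 1) / (α + 2)) + x ^ 2 := by
    rw [betaKer_eq_betaDensity, integral_betaDensity_mul_sq_sub, Nat.cast_sub (hfloor_le α),
      add_sub_cancel]
  have hp := tendsto_natFloor_mul_add_div_add hx.1 1 2
  have hq := tendsto_natFloor_mul_add_div_add hx.1 2 3
  have hlim := ((hp.mul hq).sub (hp.const_mul (2 * x))).add_const (x ^ 2)
  rw [show x * x - 2 * x * x + x ^ 2 = 0 by ring] at hlim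
  simpa only [hmoment] using hlim

lemma ContinuousOn.exists_abs_sub_le_add_mul_sq {h : ℝ → ℝ} {s : Set ℝ}
    (hh : ContinuousOn h s) (hs : IsCompact s) {x : ℝ} (hx : x ∈ s) {ε : ℝ} (hε : 0 < ε) :
    ∃ c, ∀ t ∈ s, |h t - h x| ≤ ε + c * (t - x) ^ 2 := by
  obtain ⟨M, hM⟩ := hs.exists_bound_of_continuousOn hh
  obtain ⟨δ, hδ, hnear⟩ := Metric.continuousWithinAt_iff.1 (hh x hx) ε hε
  have hc : 0 ≤ 2 * M / δ ^ 2 := by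
    have := (norm_nonneg _).trans (hM x hx)
    positivity
  refine ⟨2 * M / δ ^ 2, fun t ht => ?_⟩
  have hquad : 0 ≤ 2 * M / δ ^ 2 * (t - x) ^ 2 := by positivity
  rcases lt_or_ge (dist t x) δ with hd | hd
  · have := hnear ht hd
    rw [Real.dist_eq] at this
    linarith
  · have hδt : δ ^ 2 ≤ (t - x) ^ 2 := by
      rw [← sq_abs (t - x)]
      exact pow_le_pow_left₀ hδ.le hd 2
    calc |h t - h x| ≤ |h t| + |h x| := abs_sub _ _
      _ ≤ 2 * M := by linarith [hM t ht, hM x hx, Real.norm_eq_abs (h t), Real.norm_eq_abs (h x)]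
      _ = 2 * M / δ ^ 2 * δ ^ 2 := by field_simp
      _ ≤ 2 * M / δ ^ 2 * (t - x) ^ 2 := mul_le_mul_of_nonneg_left hδt hc
      _ ≤ ε + 2 * M / δ ^ 2 * (t - x) ^ 2 := by linarith

theorem tendsto_integral_mul_of_tendsto_integral_mul_sq_sub {ι : Type*} {l : Filter ι}
    {K : ι → ℝ → ℝ} {a b x : ℝ} {h : ℝ → ℝ} (hab : a ≤ b)
    (hK : ∀ i, ContinuousOn (K i) (Icc a b)) (hK_nonneg : ∀ i, ∀ t ∈ Icc a b, 0 ≤ K i t)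
    (hK_one : ∀ i, ∫ t in a..b, K i t = 1) (hx : x ∈ Icc a b)
    (hK_sq : Tendsto (fun i => ∫ t in a..b, K i t * (t - x) ^ 2) l (𝓝 0))
    (hh : ContinuousOn h (Icc a b)) :
    Tendsto (fun i => ∫ t in a..b, K i t * h t) l (𝓝 (h x)) := by
  rw [Metric.tendsto_nhds]
  intro ε hε
  obtain ⟨c, hc⟩ := hh.exists_abs_sub_le_add_mul_sq isCompact_Icc hx (half_pos hε)
  have hsmall : ∀ᶠ i in l, c * ∫ t in a..b, K i t * (t - x) ^ 2 < ε / 2 := by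
    have := hK_sq.const_mul c
    rw [mul_zero] at this
    exact this.eventually (gt_mem_nhds (half_pos hε))
  filter_upwards [hsmall] with i hi
  have hint {f : ℝ → ℝ} (hf : ContinuousOn f (Icc a b)) :
      IntervalIntegrable (fun t => K i t * f t) volume a b :=
    ((hK i).mul hf).intervalIntegrable_of_Icc hab
  have hsq : ContinuousOn (fun t : ℝ => (t - x) ^ 2) (Icc a b) := by fun_prop
  have hdiff : ∫ t in a..b, K i t * (h t - h x) = (∫ t in a..b, K i t * h t) - h x := by
    simp_rw [mul_sub]
    rw [intervalIntegral.integral_sub (hint hh) (hint continuousOn_const),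
      intervalIntegral.integral_mul_const, hK_one, one_mul]
  have hmajorant : ∫ t in a..b, K i t * (ε / 2 + c * (t - x) ^ 2) =
      ε / 2 + c * ∫ t in a..b, K i t * (t - x) ^ 2 := by
    simp_rw [mul_add, mul_left_comm (K i _) c]
    rw [intervalIntegral.integral_add (hint continuousOn_const) ((hint hsq).const_mul c),
      intervalIntegral.integral_mul_const, intervalIntegral.integral_const_mul, hK_one, one_mul]
  rw [Real.dist_eq, ← hdiff, ← Real.norm_eq_abs]
  calc ‖∫ t in a..b, K i t * (h t - h x)‖
      ≤ ∫ t in a..b, K i t * (ε / 2 + c * (t - x) ^ 2) := by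
        refine intervalIntegral.norm_integral_le_of_norm_le hab (ae_of_all _ fun t ht => ?_)
          (hint (continuousOn_const.add (continuousOn_const.mul hsq)))
        have ht' : t ∈ Icc a b := Ioc_subset_Icc_self ht
        rw [norm_mul, Real.norm_of_nonneg (hK_nonneg i t ht'), Real.norm_eq_abs]
        exact mul_le_mul_of_nonneg_left (hc t ht') (hK_nonneg i t ht')
    _ < ε := by linarith

theorem stmt_16 (h : ℝ → ℝ) (hh : ContinuousOn h (Set.Icc (0:ℝ) 1))
    (x : ℝ) (hx : x ∈ Set.Ioo (0:ℝ) 1) :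
    Tendsto (fun α : ℕ => ∫ t in (0:ℝ)..1, betaKer α x t * h t)
      atTop (nhds (h x)) :=
  tendsto_integral_mul_of_tendsto_integral_mul_sq_sub zero_le_one
    (fun _ => (continuous_betaDensity _ _).continuousOn) (fun _ _ => betaDensity_nonneg _ _)
    (fun _ => integral_betaDensity _ _) (Ioo_subset_Icc_self hx)
    (tendsto_integral_betaKer_mul_sq_sub (Ioo_subset_Icc_self hx)) hh
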